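/- arXiv:1112.1759 — 3 statements merged into one kernel-verified Lean document; each statement's English description precedes it below -/
import Mathlib

section
/- Let θ > 1 be real. The function n ↦ M_θ(n) is eventually strictly increasing (i.e., there exists an integer n₀ > log θ / log 2 such that M_θ(n) < M_θ(n+1) for all n ≥ n₀) if and only if θ ≤ e. -/
/-!
Write `L = log θ`. For `n > L / log 2` the root `θ^(1/n) = exp (L / n)` lies in `(1, 2)`, so
`m ≤ M θ n ↔ L * g m ≤ n` for every integer `m ≥ 1`. The first term of the series of
`log (1 + 1/x)` in powers of `1 / (2x + 1)`, and `t ≤ sinh t` at `t = log (1 + 1/x)`, give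
`2x(x+1)/(2x+1) ≤ g x ≤ x + 1/2`; in particular `x < g x` and `g (x + 1) - g x ≤ 1 + 1/(4x + 2)`.

If `L > 1`, then `L * M θ n < n`, so `M θ` grows with slope `1 / L < 1` and cannot increase by at
least one at every step. If `L < 1`, then `M θ n → ∞` and, for `m = M θ n` large,
`L * g (m + 1) ≤ L * g m + L * (1 + 1/(4m + 2)) ≤ n + 1`, i.e. `M θ (n + 1) > M θ n`.
For `θ = e` the two bounds on `g` pin down `M e n = n - 1`.
-/

open Real

/-- `M θ n = ⌊1 / {θ^(1/n)}⌋`, the integer part of the reciprocal of the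
fractional part of the `n`-th root of `θ`. -/
noncomputable def M (θ : ℝ) (n : ℕ) : ℤ := ⌊1 / Int.fract (θ ^ ((n : ℝ)⁻¹))⌋

/-- `g x = 1 / log (1 + 1/x)`. -/
noncomputable def g (x : ℝ) : ℝ := 1 / Real.log (1 + 1 / x)

open Filter

lemma Real.log_one_add_inv_le {x : ℝ} (hx : 0 < x) :
    log (1 + x⁻¹) ≤ (2 * x + 1) / (2 * x * (x + 1)) := by
  have hu : 0 < 1 + x⁻¹ := by positivity
  calc log (1 + x⁻¹) ≤ sinh (log (1 + x⁻¹)) := self_le_sinh_iff.2 (log_nonneg (by simp [hx.le]))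
    _ = ((1 + x⁻¹) - (1 + x⁻¹)⁻¹) / 2 := by rw [sinh_eq, exp_neg, exp_log hu]
    _ = (2 * x + 1) / (2 * x * (x + 1)) := by field_simp; ring

lemma Real.two_div_le_log_one_add_inv {x : ℝ} (hx : 0 < x) :
    2 / (2 * x + 1) ≤ log (1 + x⁻¹) := by
  simpa [div_eq_mul_inv] using le_hasSum (hasSum_log_one_add_inv hx) 0 fun k _ => by positivity

lemma g_le {x : ℝ} (hx : 0 < x) : g x ≤ x + 1 / 2 := by
  calc g x ≤ 1 / (2 / (2 * x + 1)) := by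
        rw [g, one_div x]
        exact one_div_le_one_div_of_le (by positivity) (two_div_le_log_one_add_inv hx)
    _ = x + 1 / 2 := by field_simp

lemma le_g {x : ℝ} (hx : 0 < x) : 2 * x * (x + 1) / (2 * x + 1) ≤ g x := by
  calc 2 * x * (x + 1) / (2 * x + 1) = 1 / ((2 * x + 1) / (2 * x * (x + 1))) := by
        rw [one_div_div]
    _ ≤ g x := by
        rw [g, one_div x]
        exact one_div_le_one_div_of_le (log_pos (by simp [hx])) (log_one_add_inv_le hx)

lemma lt_g {x : ℝ} (hx : 0 < x) : x < g x := by
  refine lt_of_lt_of_le ?_ (le_g hx)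
  rw [lt_div_iff₀ (by positivity)]
  nlinarith

lemma g_add_one_sub_le {x : ℝ} (hx : 0 < x) : g (x + 1) - g x ≤ 1 + 1 / (4 * x + 2) := by
  have h₁ := g_le (show 0 < x + 1 by linarith)
  have h₂ := le_g hx
  have : x + 1 + 1 / 2 - 2 * x * (x + 1) / (2 * x + 1) = 1 + 1 / (4 * x + 2) := by
    field_simp; ring
  linarith

lemma add_le_of_lt_succ {f : ℕ → ℤ} {n₀ : ℕ} (hf : ∀ n, n₀ ≤ n → f n < f (n + 1)) (k : ℕ) :
    f n₀ + k ≤ f (n₀ + k) := by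
  induction k with
  | zero => simp
  | succ k ih => have := hf (n₀ + k) (by omega); rw [← add_assoc]; push_cast; omega

lemma exists_gt_and_forall_ge_iff_eventually {P : ℕ → Prop} (c : ℝ) :
    (∃ n₀ : ℕ, (n₀ : ℝ) > c ∧ ∀ n, n₀ ≤ n → P n) ↔ ∀ᶠ n in atTop, P n := by
  refine ⟨fun ⟨n₀, _, h⟩ => eventually_atTop.2 ⟨n₀, h⟩, fun h => ?_⟩
  obtain ⟨N, hN⟩ := eventually_atTop.1 h
  obtain ⟨k, hk⟩ := exists_nat_gt c
  exact ⟨max N k, hk.trans_le (by exact_mod_cast le_max_right N k),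
    fun n hn => hN n (le_of_max_le_left hn)⟩

lemma eventually_log_div_log_two_lt (θ : ℝ) : ∀ᶠ n : ℕ in atTop, log θ / log 2 < n :=
  tendsto_natCast_atTop_atTop.eventually_gt_atTop _

section
variable {θ : ℝ} {n : ℕ}

lemma M_eq_floor (hθ : 1 < θ) (hn : log θ / log 2 < n) :
    M θ n = ⌊1 / (exp (log θ / n) - 1)⌋ := by
  have hn0 : (0 : ℝ) < n := lt_trans (div_pos (log_pos hθ) (log_pos one_lt_two)) hn
  have hroot : θ ^ (n : ℝ)⁻¹ = exp (log θ / n) := by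
    rw [rpow_def_of_pos (by linarith), div_eq_mul_inv]
  have h₁ : 1 < exp (log θ / n) := one_lt_exp_iff.2 (div_pos (log_pos hθ) hn0)
  have h₂ : exp (log θ / n) < 2 := by
    rw [← lt_log_iff_exp_lt two_pos, div_lt_iff₀ hn0, mul_comm]
    exact (div_lt_iff₀ (log_pos one_lt_two)).1 hn
  have hfloor : ⌊exp (log θ / n)⌋ = 1 := by
    rw [Int.floor_eq_iff]; push_cast; constructor <;> linarith
  rw [M, hroot, Int.fract, hfloor, Int.cast_one]

lemma le_M_iff (hθ : 1 < θ) (hn : log θ / log 2 < n) {m : ℤ} (hm : 0 < m) :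
    m ≤ M θ n ↔ log θ * g m ≤ n := by
  have hn0 : (0 : ℝ) < n := lt_trans (div_pos (log_pos hθ) (log_pos one_lt_two)) hn
  have hm0 : (0 : ℝ) < m := by exact_mod_cast hm
  have hlog : 0 < log (1 + 1 / (m : ℝ)) := log_pos (by simp [hm0])
  have hexp : 0 < exp (log θ / n) - 1 := by
    rw [sub_pos, one_lt_exp_iff]; exact div_pos (log_pos hθ) hn0
  rw [M_eq_floor hθ hn, Int.le_floor, le_one_div hm0 hexp, sub_le_iff_le_add',
    ← le_log_iff_exp_le (by positivity), div_le_iff₀ hn0, g, ← div_eq_mul_one_div,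
    div_le_iff₀ hlog, mul_comm]

lemma one_le_M (hθ : 1 < θ) (hn : log θ / log 2 < n) : 1 ≤ M θ n := by
  rw [le_M_iff hθ hn one_pos, g]
  norm_num
  simpa [div_eq_mul_inv] using hn.le

lemma log_mul_g_M_le (hθ : 1 < θ) (hn : log θ / log 2 < n) : log θ * g (M θ n) ≤ n :=
  (le_M_iff hθ hn (one_le_M hθ hn)).1 le_rfl


lemma tendsto_M_atTop (hθ : 1 < θ) : Tendsto (M θ) atTop atTop := by
  refine tendsto_atTop.2 fun m => ?_
  filter_upwards [eventually_log_div_log_two_lt θ,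
    tendsto_natCast_atTop_atTop.eventually_ge_atTop (log θ * g (max m 1))] with n hn hgn
  exact (le_max_left m 1).trans ((le_M_iff hθ hn (by omega)).2 (by exact_mod_cast hgn))

lemma not_eventually_M_lt_succ (hθ : exp 1 < θ) :
    ¬ ∀ᶠ n in atTop, M θ n < M θ (n + 1) := by
  intro h
  have hθ₁ : 1 < θ := one_lt_exp_iff.2 one_pos |>.trans hθ
  have hL : 1 < log θ := by simpa using log_lt_log (exp_pos 1) hθ
  obtain ⟨n₀, hn₀⟩ := eventually_atTop.1 (h.and (eventually_log_div_log_two_lt θ))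
  obtain ⟨k, hk⟩ := exists_nat_gt (n₀ / (log θ - 1))
  have hn : log θ / log 2 < (n₀ + k : ℕ) := (hn₀ _ (by omega)).2
  have hMk : (k : ℝ) < M θ (n₀ + k) := by
    have := add_le_of_lt_succ (fun n hn => (hn₀ n hn).1) k
    have := one_le_M hθ₁ (hn₀ n₀ le_rfl).2
    exact_mod_cast (show (k : ℤ) < M θ (n₀ + k) by omega)
  have : log θ * k < n₀ + k := by
    calc log θ * k < log θ * g (M θ (n₀ + k)) :=
          mul_lt_mul_of_pos_left (hMk.trans (lt_g (by linarith))) (by linarith)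
      _ ≤ n₀ + k := by exact_mod_cast log_mul_g_M_le hθ₁ hn
  rw [div_lt_iff₀ (by linarith)] at hk
  linarith

lemma M_exp_one (hn : 2 ≤ n) : M (exp 1) n = n - 1 := by
  have hn₂ : (2 : ℝ) ≤ n := by exact_mod_cast hn
  have hn' : log (exp 1) / log 2 < n := by
    rw [log_exp, div_lt_iff₀ (log_pos one_lt_two)]
    nlinarith [log_two_gt_d9]
  have hθ : 1 < exp 1 := one_lt_exp_iff.2 one_pos
  refine le_antisymm (Int.le_sub_one_of_lt (lt_of_not_ge fun h => ?_))
    ((le_M_iff hθ hn' (by omega)).2 ?_)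
  · have := (le_M_iff hθ hn' (by omega)).1 h
    rw [log_exp, one_mul] at this
    exact (lt_g (by positivity : (0 : ℝ) < (n : ℤ))).not_ge (by simpa using this)
  · rw [log_exp, one_mul]
    push_cast
    linarith [g_le (by linarith : (0 : ℝ) < n - 1)]

lemma eventually_M_lt_succ (hθ : 1 < θ) (hθe : θ < exp 1) :
    ∀ᶠ n in atTop, M θ n < M θ (n + 1) := by
  have hL : log θ < 1 := by simpa using log_lt_log (by linarith) hθe
  have hL₀ : 0 < log θ := log_pos hθ
  obtain ⟨m₀, hm₀⟩ := exists_nat_gt (log θ / (1 - log θ))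
  have hgap : ∀ m : ℤ, m₀ ≤ m → log θ * (1 + 1 / (4 * m + 2)) ≤ 1 := by
    intro m hm
    have hm' : (m₀ : ℝ) ≤ m := by exact_mod_cast hm
    rw [div_lt_iff₀ (by linarith)] at hm₀
    have h4 : (0 : ℝ) < 4 * m + 2 := by linarith [(Nat.cast_nonneg m₀ : (0 : ℝ) ≤ m₀)]
    rw [mul_add, mul_one_div, ← le_sub_iff_add_le', div_le_iff₀ h4]
    nlinarith
  filter_upwards [eventually_log_div_log_two_lt θ, (tendsto_M_atTop hθ).eventually_ge_atTop m₀]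
    with n hn hMn
  have hn₁ : log θ / log 2 < (n + 1 : ℕ) := hn.trans (by simp)
  have hM₀ : (0 : ℝ) < M θ n := by exact_mod_cast one_le_M hθ hn
  rw [Int.lt_iff_add_one_le, le_M_iff hθ hn₁ (by omega)]
  push_cast
  calc log θ * g (M θ n + 1)
        = log θ * g (M θ n) + log θ * (g (M θ n + 1) - g (M θ n)) := by ring
    _ ≤ n + log θ * (1 + 1 / (4 * M θ n + 2)) := by
        gcongr
        · exact log_mul_g_M_le hθ hn
        · exact g_add_one_sub_le hM₀
    _ ≤ n + 1 := by linarith [hgap _ hMn]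

end

theorem stmt_13 (θ : ℝ) (hθ : 1 < θ) :
    (∃ n₀ : ℕ, (n₀ : ℝ) > Real.log θ / Real.log 2 ∧
      ∀ n : ℕ, n₀ ≤ n → M θ n < M θ (n + 1)) ↔ θ ≤ Real.exp 1 := by
  rw [exists_gt_and_forall_ge_iff_eventually]
  refine ⟨fun h => not_lt.1 fun hθe => not_eventually_M_lt_succ hθe h, fun hθe => ?_⟩
  rcases hθe.eq_or_lt with rfl | hθe
  · filter_upwards [eventually_ge_atTop 2] with n hn
    rw [M_exp_one hn, M_exp_one (by omega)]
    omega
  · exact eventually_M_lt_succ hθ hθe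
end

section
/- Let ℓ be an odd integer with ℓ ≥ 3, and let θ = e^{2/ℓ}. Then for every positive integer n: if n is even, M_θ(n) = (ℓ/2)·n − 1 (i.e., M_θ(n) = (ℓn − 2)/2), and if n is odd, M_θ(n) = (ℓn − 1)/2. -/
open Real

/-!
Write `m = ℓ n`, so that `θ^{1/n} = e^{2/m}`. The bounds `1 + x < e^x < (2 + x)/(2 - x)` at
`x = 2/m` give `(m - 1)/2 < 1/(e^{2/m} - 1) < m/2`. One endpoint of this interval of length `1/2`
is an integer and the other a half-integer, so the floor is `⌊(m - 1)/2⌋`: that is `m/2 - 1` for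
even `m` and `(m - 1)/2` for odd `m`. For `m ≥ 3` the same upper bound gives `e^{2/m} < 2`, so the
fractional part of `e^{2/m}` is `e^{2/m} - 1`.
-/

section FloorRing

variable {R : Type*} [Field R] [LinearOrder R] [IsStrictOrderedRing R] [FloorRing R]

lemma Int.fract_eq_sub_one {a : R} (h₁ : 1 ≤ a) (h₂ : a < 2) : Int.fract a = a - 1 :=
  Int.fract_eq_iff.mpr ⟨by linarith, by linarith, 1, by simp⟩

lemma Int.floor_eq_sub_one_ediv_two {v : R} {m : ℤ} (hlo : ((m : R) - 1) / 2 < v)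
    (hhi : v < m / 2) : ⌊v⌋ = (m - 1) / 2 := by
  have hdiv : ((m - 1) / 2 : ℤ) * 2 + (m - 1) % 2 = m - 1 := Int.ediv_mul_add_emod _ _
  have hmod : (0 : R) ≤ ((m - 1) % 2 : ℤ) ∧ (((m - 1) % 2 : ℤ) : R) ≤ 1 := by
    constructor <;> norm_cast <;> omega
  have hdivR : (((m - 1) / 2 : ℤ) : R) * 2 + ((m - 1) % 2 : ℤ) = m - 1 := by exact_mod_cast hdiv
  rw [Int.floor_eq_iff]
  constructor <;> linarith

end FloorRing

namespace Real

lemma exp_two_div_lt {m : ℝ} (hm : 1 < m) : exp (2 / m) < (m + 1) / (m - 1) := by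
  have hm₀ : 0 < m := by linarith
  have hx : 2 / m < 2 := by rw [div_lt_iff₀ hm₀]; linarith
  convert exp_lt_two_add_div_two_sub (by positivity) hx using 1
  field_simp

lemma exp_two_div_lt_two {m : ℝ} (hm : 3 ≤ m) : exp (2 / m) < 2 :=
  (exp_two_div_lt (by linarith)).trans_le <| by rw [div_le_iff₀ (by linarith)]; linarith

lemma one_div_exp_two_div_sub_one_lt {m : ℝ} (hm : 0 < m) : 1 / (exp (2 / m) - 1) < m / 2 := by
  have hlt : 2 / m < exp (2 / m) - 1 := by linarith [add_one_lt_exp (by positivity : 2 / m ≠ 0)]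
  calc 1 / (exp (2 / m) - 1) < 1 / (2 / m) := one_div_lt_one_div_of_lt (by positivity) hlt
    _ = m / 2 := one_div_div 2 m

lemma sub_one_div_two_lt_one_div_exp_two_div_sub_one {m : ℝ} (hm : 1 < m) :
    (m - 1) / 2 < 1 / (exp (2 / m) - 1) := by
  have hlt : exp (2 / m) - 1 < 2 / (m - 1) := by
    have h := exp_two_div_lt hm
    have hm₁ : m - 1 ≠ 0 := (sub_pos.mpr hm).ne'
    rwa [show (m + 1) / (m - 1) = 1 + 2 / (m - 1) by field_simp; ring,
      ← sub_lt_iff_lt_add'] at h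
  have hpos : 0 < exp (2 / m) - 1 := by
    rw [sub_pos]; exact one_lt_exp_iff.mpr (by positivity)
  calc (m - 1) / 2 = 1 / (2 / (m - 1)) := (one_div_div 2 (m - 1)).symm
    _ < 1 / (exp (2 / m) - 1) := one_div_lt_one_div_of_lt hpos hlt

lemma floor_one_div_exp_two_div_sub_one {m : ℕ} (hm : 1 < m) :
    ⌊1 / (exp (2 / m) - 1)⌋ = ((m : ℤ) - 1) / 2 := by
  have hmR : (1 : ℝ) < m := by exact_mod_cast hm
  apply Int.floor_eq_sub_one_ediv_two <;> push_cast
  · exact sub_one_div_two_lt_one_div_exp_two_div_sub_one hmR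
  · exact one_div_exp_two_div_sub_one_lt (by linarith)

end Real

lemma M_exp_two_div {ℓ n : ℕ} (h : 3 ≤ ℓ * n) :
    M (exp (2 / ℓ)) n = (((ℓ * n : ℕ) : ℤ) - 1) / 2 := by
  have hmR : (3 : ℝ) ≤ (ℓ * n : ℕ) := by exact_mod_cast h
  have hroot : exp (2 / ℓ) ^ ((n : ℝ)⁻¹) = exp (2 / (ℓ * n : ℕ)) := by
    rw [← exp_mul]
    push_cast
    field_simp
  have hfract : Int.fract (exp (2 / ℓ) ^ ((n : ℝ)⁻¹)) = exp (2 / (ℓ * n : ℕ)) - 1 := by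
    rw [hroot]
    exact Int.fract_eq_sub_one (one_le_exp (by positivity)) (exp_two_div_lt_two hmR)
  rw [M, hfract, floor_one_div_exp_two_div_sub_one (by omega)]

theorem stmt_14 (ℓ : ℕ) (hodd : Odd ℓ) (hℓ : 3 ≤ ℓ) (θ : ℝ)
    (hθ : θ = Real.exp (2 / (ℓ : ℝ))) (n : ℕ) (hn : 1 ≤ n) :
    (Even n → 2 * M θ n = (ℓ : ℤ) * n - 2) ∧
    (Odd n → 2 * M θ n = (ℓ : ℤ) * n - 1) := by
  subst hθ
  rw [M_exp_two_div (le_mul_of_le_of_one_le hℓ hn)]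
  push_cast
  constructor
  · intro hn_even
    obtain ⟨k, hk⟩ := hn_even.mul_left ℓ
    have hkZ : (ℓ : ℤ) * n = k + k := by exact_mod_cast hk
    omega
  · intro hn_odd
    obtain ⟨k, hk⟩ := hodd.mul hn_odd
    have hkZ : (ℓ : ℤ) * n = 2 * k + 1 := by exact_mod_cast hk
    omega
end

section
/- Let k and ℓ be positive integers and let θ = e^{k/ℓ}. Let n be a positive integer with n > max(k/(ℓ·log 2), (e^{k/ℓ} − 1)(2k + 1)). Let r ∈ {0, 1, …, k−1} with n ≡ r (mod k), and let v_r be the unique integer with 0 ≤ v_r ≤ 2k − 1 and k + 2ℓr ≡ v_r (mod 2k). Then M_θ(n) = (ℓ/k)·n − 1/2 − v_r/(2k), and consequently M_θ(n) = ⌊(ℓ/k)·n − 1/2⌋. -/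
open Real

lemma one_div_sub_half_le_one_div_exp_sub_one {x : ℝ} (hx₀ : 0 < x) (hx₁ : x ≤ 1) :
    1 / x - 1 / 2 ≤ 1 / (exp x - 1) := by
  have hcubic : exp x ≤ 1 + x + x ^ 2 / 2 + 2 / 9 * x ^ 3 := by
    have h := exp_bound' hx₀.le hx₁ (n := 3) (by norm_num)
    norm_num [Finset.sum_range_succ, Nat.factorial] at h
    linarith
  have hE : 0 < exp x - 1 := by linarith [add_one_lt_exp hx₀.ne']
  -- `(2 - x) (x + x²/2 + 2x³/9) = 2x - x³/18 - 2x⁴/9 ≤ 2x`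
  have key : (2 - x) * (exp x - 1) ≤ 2 * x := by
    nlinarith [mul_le_mul_of_nonneg_left hcubic (by linarith : (0 : ℝ) ≤ 2 - x),
      pow_pos hx₀ 3, pow_pos hx₀ 4]
  rw [div_sub_div _ _ hx₀.ne' two_ne_zero, div_le_div_iff₀ (by positivity) hE]
  linarith

lemma one_div_exp_sub_one_le {x : ℝ} (hx : 0 < x) :
    1 / (exp x - 1) ≤ 1 / x - 1 / 2 + x / (2 * (2 + x)) := by
  have hquad := quadratic_le_exp_of_nonneg hx.le
  have hE : 0 < x + x ^ 2 / 2 := by positivity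
  calc 1 / (exp x - 1) ≤ 1 / (x + x ^ 2 / 2) := one_div_le_one_div_of_le hE (by linarith)
    _ = 1 / x - 1 / 2 + x / (2 * (2 + x)) := by field_simp; ring

lemma floor_one_div_exp_sub_one {x : ℝ} (hx₀ : 0 < x) (hx₁ : x ≤ 1)
    (hfract : Int.fract (1 / x - 1 / 2) + x / (2 * (2 + x)) < 1) :
    ⌊1 / (exp x - 1)⌋ = ⌊1 / x - 1 / 2⌋ := by
  rw [Int.floor_eq_iff]
  constructor
  · exact (Int.floor_le _).trans (one_div_sub_half_le_one_div_exp_sub_one hx₀ hx₁)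
  · calc 1 / (exp x - 1) ≤ 1 / x - 1 / 2 + x / (2 * (2 + x)) := one_div_exp_sub_one_le hx₀
      _ < ⌊1 / x - 1 / 2⌋ + 1 := by linarith [Int.floor_add_fract (1 / x - 1 / 2)]

lemma fract_exp_of_lt_log_two {y : ℝ} (hy₀ : 0 ≤ y) (hy : y < log 2) :
    Int.fract (exp y) = exp y - 1 := by
  have h2 : exp y < 2 := (exp_lt_exp.mpr hy).trans_eq (exp_log two_pos)
  rw [Int.fract_eq_iff]
  exact ⟨by linarith [one_le_exp hy₀], by linarith, 1, by simp⟩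

lemma M_exp {t : ℝ} (ht : 0 ≤ t) {n : ℕ} (htn : t / n < log 2) :
    M (exp t) n = ⌊1 / (exp (t / n) - 1)⌋ := by
  rw [M, ← exp_mul, ← div_eq_mul_inv, fract_exp_of_lt_log_two (by positivity) htn]

lemma fract_div_mul_sub_half {k ℓ n r v : ℕ} (hnr : n ≡ r [MOD k])
    (hv : v < 2 * k) (hvr : k + 2 * ℓ * r ≡ v [MOD 2 * k]) :
    Int.fract ((ℓ : ℝ) / k * n - 1 / 2) = v / (2 * k) := by
  have hk : (0 : ℝ) < k := by norm_cast; omega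
  obtain ⟨a, ha⟩ := Nat.modEq_iff_dvd.mp hnr
  obtain ⟨b, hb⟩ := Nat.modEq_iff_dvd.mp hvr
  have hc : 2 * (k : ℤ) * (-ℓ * a - 1 - b) = 2 * ℓ * n - k - v := by
    push_cast at ha hb
    linear_combination 2 * (ℓ : ℤ) * ha + hb
  rw [Int.fract_eq_iff]
  refine ⟨by positivity, by rw [div_lt_one (by positivity)]; exact_mod_cast hv,
    -ℓ * a - 1 - b, ?_⟩
  have hc' : 2 * (k : ℝ) * ((-ℓ * a - 1 - b : ℤ) : ℝ) = 2 * ℓ * n - k - v := by exact_mod_cast hc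
  field_simp
  linear_combination -hc'

lemma div_two_mul_add_div_lt_one {k v : ℕ} (hv : v < 2 * k) {x : ℝ} (hx : 0 < x)
    (hkx : k * x < 2 + x) :
    (v : ℝ) / (2 * k) + x / (2 * (2 + x)) < 1 := by
  have hk : (0 : ℝ) < k := by norm_cast; omega
  have hv' : (v : ℝ) + 1 ≤ 2 * k := by norm_cast
  have herror : x / (2 * (2 + x)) < 1 / (2 * k) := by
    rw [div_lt_div_iff₀ (by positivity) (by positivity)]
    linarith
  calc (v : ℝ) / (2 * k) + x / (2 * (2 + x)) < (v + 1) / (2 * k) := by rw [add_div]; linarith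
    _ ≤ 1 := by rw [div_le_one (by positivity)]; exact hv'

theorem stmt_16_general (k ℓ : ℕ) (hk : 0 < k) (hℓ : 0 < ℓ) (θ : ℝ)
    (hθ : θ = Real.exp ((k : ℝ) / (ℓ : ℝ))) (n : ℕ)
    (hn : (n : ℝ) > max ((k : ℝ) / ((ℓ : ℝ) * Real.log 2))
      ((Real.exp ((k : ℝ) / (ℓ : ℝ)) - 1) * (2 * (k : ℝ) + 1)))
    (r : ℕ) (hnr : n ≡ r [MOD k])
    (v : ℕ) (hv : v ≤ 2 * k - 1) (hvr : k + 2 * ℓ * r ≡ v [MOD 2 * k]) :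
    (M θ n : ℝ) = (ℓ : ℝ) / (k : ℝ) * n - 1 / 2 - (v : ℝ) / (2 * (k : ℝ)) ∧
    M θ n = ⌊(ℓ : ℝ) / (k : ℝ) * n - 1 / 2⌋ := by
  have hk' : (0 : ℝ) < k := by exact_mod_cast hk
  have hℓ' : (0 : ℝ) < ℓ := by exact_mod_cast hℓ
  have hn' : (0 : ℝ) < n := lt_of_le_of_lt (le_max_of_le_left (by positivity)) hn
  set x := (k : ℝ) / ℓ / n with hx
  have hx₀ : 0 < x := by positivity
  have hx_log : x < log 2 := by
    have h := (le_max_left _ _).trans_lt hn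
    rw [div_lt_iff₀ (by positivity)] at h
    rw [hx, div_div, div_lt_iff₀ (by positivity)]
    linarith
  have hkx : k * x < 1 := by
    have h := (le_max_right _ _).trans_lt hn
    have hexp := add_one_le_exp ((k : ℝ) / ℓ)
    rw [hx, ← mul_div_assoc, div_lt_one hn']
    nlinarith [div_pos hk' hℓ']
  have hinv : 1 / x = (ℓ : ℝ) / k * n := by rw [hx]; field_simp
  have hfract := fract_div_mul_sub_half hnr (by omega) hvr
  have hfloor : M θ n = ⌊(ℓ : ℝ) / k * n - 1 / 2⌋ := by
    rw [hθ, M_exp (by positivity) hx_log, ← hinv]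
    refine floor_one_div_exp_sub_one hx₀ (by linarith [log_two_lt_d9]) ?_
    rw [hinv, hfract]
    exact div_two_mul_add_div_lt_one (by omega) hx₀ (by linarith)
  refine ⟨?_, hfloor⟩
  rw [hfloor, ← Int.self_sub_fract, hfract]

theorem stmt_16 (k ℓ : ℕ) (hk : 0 < k) (hℓ : 0 < ℓ) (θ : ℝ)
    (hθ : θ = Real.exp ((k : ℝ) / (ℓ : ℝ))) (n : ℕ)
    (hn : (n : ℝ) > max ((k : ℝ) / ((ℓ : ℝ) * Real.log 2))
      ((Real.exp ((k : ℝ) / (ℓ : ℝ)) - 1) * (2 * (k : ℝ) + 1)))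
    (r : ℕ) (hr : r < k) (hnr : n ≡ r [MOD k])
    (v : ℕ) (hv : v ≤ 2 * k - 1) (hvr : k + 2 * ℓ * r ≡ v [MOD 2 * k]) :
    (M θ n : ℝ) = (ℓ : ℝ) / (k : ℝ) * n - 1 / 2 - (v : ℝ) / (2 * (k : ℝ)) ∧
    M θ n = ⌊(ℓ : ℝ) / (k : ℝ) * n - 1 / 2⌋ :=
  stmt_16_general k ℓ hk hℓ θ hθ n hn r hnr v hv hvr
end
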